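/- Let X and Y be standard Borel spaces, let κ be a Markov kernel from X to Y, let P be a probability measure on X × Y with first marginal P_X, and let π be a probability measure on X. If KL(P ‖ π ⊗ κ) < ∞, then KL(P ‖ π ⊗ κ) = KL(P ‖ P_X ⊗ κ) + KL(P_X ⊗ κ ‖ π ⊗ κ), and moreover KL(P_X ⊗ κ ‖ π ⊗ κ) = KL(P_X ‖ π). -/

import Mathlib

open MeasureTheory ProbabilityTheory Classical

open scoped ENNReal

/-- Kullback-Leibler divergence between two measures, valued in `[0, ∞]`:
`KL(μ‖ν) = ∫ log(dμ/dν) dμ` when `μ ≪ ν` and the log-likelihood ratio is `μ`-integrable,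
and `+∞` otherwise. -/
noncomputable def KL {α : Type*} [MeasurableSpace α] (μ ν : Measure α) : ℝ≥0∞ :=
  if μ ≪ ν ∧ Integrable (llr μ ν) μ then ENNReal.ofReal (∫ x, llr μ ν x ∂μ) else ∞

/-!
Disintegrate `P = P_X ⊗ P_{Y|X}` (possible since `Y` is standard Borel). The chain rule for
`KL` of composition-products then splits `KL(P ‖ π ⊗ κ)` as `KL(P_X ‖ π) + KL(P ‖ P_X ⊗ κ)`,
and `KL(P_X ⊗ κ ‖ π ⊗ κ) = KL(P_X ‖ π)` because the density of `P_X ⊗ κ` with respect to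
`π ⊗ κ` is `dP_X/dπ` evaluated at the first coordinate.
-/

open InformationTheory

/-- `klDiv` carries the mass correction `ν univ - μ univ`, which vanishes under `h`. -/
lemma KL_eq_klDiv {α : Type*} [MeasurableSpace α] {μ ν : Measure α}
    (h : μ Set.univ = ν Set.univ) : KL μ ν = klDiv μ ν := by
  simp [KL, klDiv_def, measureReal_def, h]

lemma klDiv_eq_klDiv_fst_compProd_add {X Y : Type*} [MeasurableSpace X] [MeasurableSpace Y]
    [StandardBorelSpace Y] [Nonempty Y] (P : Measure (X × Y)) [IsFiniteMeasure P]
    (π : Measure X) [IsFiniteMeasure π] (κ : Kernel X Y) [IsMarkovKernel κ] :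
    klDiv P (π ⊗ₘ κ) = klDiv P (P.fst ⊗ₘ κ) + klDiv (P.fst ⊗ₘ κ) (π ⊗ₘ κ) := by
  have hP : P.fst ⊗ₘ P.condKernel = P := P.disintegrate P.condKernel
  calc klDiv P (π ⊗ₘ κ) = klDiv (P.fst ⊗ₘ P.condKernel) (π ⊗ₘ κ) := by rw [hP]
    _ = klDiv P.fst π + klDiv (P.fst ⊗ₘ P.condKernel) (P.fst ⊗ₘ κ) :=
      klDiv_compProd_eq_add _ _ _ _
    _ = _ := by rw [hP, klDiv_compProd_left, add_comm]

theorem kl_compProd_pythagorean_general {X Y : Type*} [MeasurableSpace X] [MeasurableSpace Y]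
    [StandardBorelSpace Y]
    (κ : Kernel X Y) [IsMarkovKernel κ]
    (P : Measure (X × Y)) [IsProbabilityMeasure P]
    (π : Measure X) [IsProbabilityMeasure π] :
    KL P (π ⊗ₘ κ) = KL P (P.fst ⊗ₘ κ) + KL (P.fst ⊗ₘ κ) (π ⊗ₘ κ) ∧
      KL (P.fst ⊗ₘ κ) (π ⊗ₘ κ) = KL P.fst π := by
  obtain ⟨-, y⟩ : Nonempty (X × Y) := nonempty_of_isProbabilityMeasure P
  have : Nonempty Y := ⟨y⟩
  simp only [KL_eq_klDiv, measure_univ]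
  exact ⟨klDiv_eq_klDiv_fst_compProd_add P π κ, klDiv_compProd_left P.fst π κ⟩

/-- Pythagorean identity: if `KL(P ‖ π ⊗ₘ κ) < ∞` then it decomposes as
`KL(P ‖ P.fst ⊗ₘ κ) + KL(P.fst ⊗ₘ κ ‖ π ⊗ₘ κ)`, and the second term equals
`KL(P.fst ‖ π)`. -/
theorem kl_compProd_pythagorean {X Y : Type*} [MeasurableSpace X] [MeasurableSpace Y]
    [StandardBorelSpace X] [StandardBorelSpace Y]
    (κ : Kernel X Y) [IsMarkovKernel κ]
    (P : Measure (X × Y)) [IsProbabilityMeasure P]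
    (π : Measure X) [IsProbabilityMeasure π]
    (hfin : KL P (π ⊗ₘ κ) < ∞) :
    KL P (π ⊗ₘ κ) = KL P (P.fst ⊗ₘ κ) + KL (P.fst ⊗ₘ κ) (π ⊗ₘ κ) ∧
      KL (P.fst ⊗ₘ κ) (π ⊗ₘ κ) = KL P.fst π :=
  kl_compProd_pythagorean_general κ P π
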